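/- The adjugate of a block upper triangular matrix is adj([[U, W],[0, V]]) = [[det(V)·adj(U), −adj(U)·W·adj(V)],[0, det(U)·adj(V)]]. -/
import Mathlib

open Matrix Polynomial

lemma aux_adj_blocks {Λ : Type*} [CommRing Λ] {p q : ℕ}
    (U : Matrix (Fin p) (Fin p) Λ) (V : Matrix (Fin q) (Fin q) Λ)
    (W : Matrix (Fin p) (Fin q) Λ)
    (hU : IsLeftRegular U.det) (hV : IsLeftRegular V.det) :
    (Matrix.fromBlocks U W 0 V).adjugate =
      Matrix.fromBlocks (V.det • U.adjugate) (-(U.adjugate * W * V.adjugate))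
        0 (U.det • V.adjugate) := by
  have hM : IsLeftRegular (Matrix.fromBlocks U W 0 V).det := by
    rw [Matrix.det_fromBlocks_zero₂₁]
    exact hU.mul hV
  refine (Matrix.isRegular_of_isLeftRegular_det hM).left ?_
  show _ * _ = _ * _
  rw [Matrix.mul_adjugate, Matrix.fromBlocks_multiply]
  simp only [Matrix.mul_smul, Matrix.mul_adjugate, Matrix.zero_mul, Matrix.mul_zero,
    add_zero, zero_add, Matrix.mul_neg, Matrix.det_fromBlocks_zero₂₁,
    Matrix.smul_mul, Matrix.one_mul, ← Matrix.mul_assoc, neg_add_cancel, smul_zero,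
    neg_zero, smul_smul]
  rw [← Matrix.fromBlocks_one, Matrix.fromBlocks_smul, mul_comm V.det U.det]
  simp only [smul_zero]

/-- The adjugate of a block upper triangular matrix:
`adj([[U,W],[0,V]]) = [[det(V)·adj(U), −adj(U)·W·adj(V)],[0, det(U)·adj(V)]]`. -/
theorem stmt_13 (Λ : Type*) [CommRing Λ] (p q : ℕ)
    (U : Matrix (Fin p) (Fin p) Λ) (V : Matrix (Fin q) (Fin q) Λ)
    (W : Matrix (Fin p) (Fin q) Λ) :
    (Matrix.fromBlocks U W 0 V).adjugate =
      Matrix.fromBlocks (V.det • U.adjugate) (-(U.adjugate * W * V.adjugate))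
        0 (U.det • V.adjugate) := by
  let e : Λ[X] →+* Λ := Polynomial.evalRingHom 0
  let gU : Matrix (Fin p) (Fin p) Λ[X] := U.map Polynomial.C + (X : Λ[X]) • 1
  let gV : Matrix (Fin q) (Fin q) Λ[X] := V.map Polynomial.C + (X : Λ[X]) • 1
  let gW : Matrix (Fin p) (Fin q) Λ[X] := W.map Polynomial.C
  have hU : IsLeftRegular gU.det := by
    refine (Polynomial.Monic.isRegular ?_).left
    simp only [gU, Polynomial.Monic.def, ← Polynomial.leadingCoeff_det_X_one_add_C U, add_comm]
  have hV : IsLeftRegular gV.det := by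
    refine (Polynomial.Monic.isRegular ?_).left
    simp only [gV, Polynomial.Monic.def, ← Polynomial.leadingCoeff_det_X_one_add_C V, add_comm]
  have hgU : gU.map e = U := by ext i j; simp [e, gU, Matrix.one_apply, apply_ite (Polynomial.eval (0:Λ))]
  have hgV : gV.map e = V := by ext i j; simp [e, gV, Matrix.one_apply, apply_ite (Polynomial.eval (0:Λ))]
  have hgW : gW.map e = W := by ext i j; simp [e, gW]
  have hadjU : gU.adjugate.map e = U.adjugate := by
    rw [show gU.adjugate.map e = e.mapMatrix gU.adjugate from rfl, RingHom.map_adjugate,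
      RingHom.mapMatrix_apply, hgU]
  have hadjV : gV.adjugate.map e = V.adjugate := by
    rw [show gV.adjugate.map e = e.mapMatrix gV.adjugate from rfl, RingHom.map_adjugate,
      RingHom.mapMatrix_apply, hgV]
  have hdetU : e gU.det = U.det := by
    rw [show e gU.det = (e.mapMatrix gU).det from (RingHom.map_det e gU), RingHom.mapMatrix_apply, hgU]
  have hdetV : e gV.det = V.det := by
    rw [show e gV.det = (e.mapMatrix gV).det from (RingHom.map_det e gV), RingHom.mapMatrix_apply, hgV]
  have key := congrArg (fun M => M.map e) (aux_adj_blocks gU gV gW hU hV)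
  rw [show (fromBlocks gU gW 0 gV).adjugate.map e = e.mapMatrix (fromBlocks gU gW 0 gV).adjugate from rfl,
    RingHom.map_adjugate, RingHom.mapMatrix_apply, Matrix.fromBlocks_map, hgU, hgV, hgW] at key
  rw [Matrix.fromBlocks_map] at key
  have h0 : (0 : Matrix (Fin q) (Fin p) Λ[X]).map e = 0 := by ext i j; simp [e]
  rw [h0] at key
  have h11 : (gV.det • gU.adjugate).map e = V.det • U.adjugate := by
    ext i j
    simp only [Matrix.map_apply, Matrix.smul_apply, smul_eq_mul, _root_.map_mul, hdetV]
    exact congrArg (V.det * ·) (congrFun (congrFun hadjU i) j)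
  have h22 : (gU.det • gV.adjugate).map e = U.det • V.adjugate := by
    ext i j
    simp only [Matrix.map_apply, Matrix.smul_apply, smul_eq_mul, _root_.map_mul, hdetU]
    exact congrArg (U.det * ·) (congrFun (congrFun hadjV i) j)
  have hm : (gU.adjugate * gW * gV.adjugate).map e = U.adjugate * W * V.adjugate := by
    rw [Matrix.map_mul, Matrix.map_mul, hadjU, hadjV, hgW]
  have h12 : (-(gU.adjugate * gW * gV.adjugate)).map e
      = -(U.adjugate * W * V.adjugate) := by
    rw [← hm]; ext i j; simp [e]
  rw [h11, h12, h22] at key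
  exact key
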